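/- For Λ > 0 and 1 < p < 3, the function r_p(t) implicitly defined by ∫_{r_p(t)}^{R_Λ} ρ^{-2/(p-1)}(1-(Λ/3)ρ²)^{-1/2} dρ = e^{-t/(p-1)} converges pointwise, as p → 1⁺, to r_1(t) = e^{t/2} for t < 2 log R_Λ and r_1(t) = R_Λ for t ≥ 2 log R_Λ, where R_Λ = √(3/Λ). -/

import Mathlib

/-!
Comparing the kernel `(1 - Λρ²/3)^{-1/2}` with `1` from below, and `ρ^{-2/(p-1)}` with its value
at `r` from above, squeezes `u_p(r)` between `(r^{-k} - R^{-k}) / k`, `k = (3-p)/(p-1)`, and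
`(π/2) R r^{-2/(p-1)}`, where `(π/2) R = R arcsin 1` is the total mass of the kernel.
Solving `u_p(r_p(t)) = e^{-t/(p-1)}` against these bounds traps `r_p(t)` between
`2^{-1/k} min(k^{-1/k} e^{t/(3-p)}, R)` and `min(((π/2) R)^{(p-1)/2} e^{t/2}, R)`;
as `p → 1⁺` we have `k → ∞`, and both bounds tend to `min(e^{t/2}, R)`.
-/

open Real Filter MeasureTheory Set Topology

/-- The radial profile of the model `p`-Green's function. -/
noncomputable def uModel (Λ p r : ℝ) : ℝ :=
  ∫ ρ in r..Real.sqrt (3 / Λ), ρ ^ (-(2 / (p - 1))) / Real.sqrt (1 - Λ / 3 * ρ ^ 2)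

section Kernel

variable {Λ : ℝ}

lemma div_three_mul_sqrt_three_div_sq (hΛ : 0 < Λ) : Λ / 3 * √(3 / Λ) ^ 2 = 1 := by
  rw [sq_sqrt (by positivity)]
  field_simp

lemma one_sub_div_three_mul_sq_pos (hΛ : 0 < Λ) {ρ : ℝ} (hρ₀ : 0 ≤ ρ) (hρ : ρ < √(3 / Λ)) :
    0 < 1 - Λ / 3 * ρ ^ 2 := by
  have hΛR := div_three_mul_sqrt_three_div_sq hΛ
  have hρR : ρ ^ 2 < √(3 / Λ) ^ 2 := pow_lt_pow_left₀ hρ hρ₀ two_ne_zero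
  nlinarith

lemma hasDerivAt_mul_arcsin_div_sqrt (hΛ : 0 < Λ) {ρ : ℝ} (hρ : ρ ∈ Ioo 0 √(3 / Λ)) :
    HasDerivAt (fun ρ ↦ √(3 / Λ) * arcsin (ρ / √(3 / Λ))) (√(1 - Λ / 3 * ρ ^ 2))⁻¹ ρ := by
  set R := √(3 / Λ)
  have hR : 0 < R := hρ.1.trans hρ.2
  have h₁ : ρ / R ≠ -1 := by
    have : 0 < ρ / R := div_pos hρ.1 hR
    linarith
  have h₂ : ρ / R ≠ 1 := ((div_lt_one hR).2 hρ.2).ne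
  refine (((hasDerivAt_arcsin h₁ h₂).comp ρ ((hasDerivAt_id ρ).div_const R)).const_mul
    R).congr_deriv ?_
  have hΛR : Λ / 3 = 1 / R ^ 2 :=
    eq_one_div_of_mul_eq_one_left (div_three_mul_sqrt_three_div_sq hΛ)
  rw [hΛR]
  field_simp

lemma intervalIntegrable_inv_sqrt_one_sub (hΛ : 0 < Λ) {x : ℝ} (hx : 0 ≤ x)
    (hxR : x ≤ √(3 / Λ)) :
    IntervalIntegrable (fun ρ ↦ (√(1 - Λ / 3 * ρ ^ 2))⁻¹) volume x √(3 / Λ) := by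
  rw [intervalIntegrable_iff_integrableOn_Ioc_of_le hxR]
  exact intervalIntegral.integrableOn_deriv_of_nonneg (by fun_prop)
    (fun ρ hρ ↦ hasDerivAt_mul_arcsin_div_sqrt hΛ ⟨hx.trans_lt hρ.1, hρ.2⟩) fun ρ _ ↦ by positivity

lemma integral_inv_sqrt_one_sub (hΛ : 0 < Λ) :
    ∫ ρ in 0..√(3 / Λ), (√(1 - Λ / 3 * ρ ^ 2))⁻¹ = π / 2 * √(3 / Λ) := by
  have hR : 0 < √(3 / Λ) := sqrt_pos.2 (by positivity)
  rw [intervalIntegral.integral_eq_sub_of_hasDerivAt_of_le hR.le (by fun_prop)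
    (fun ρ hρ ↦ hasDerivAt_mul_arcsin_div_sqrt hΛ hρ)
    (intervalIntegrable_inv_sqrt_one_sub hΛ le_rfl hR.le),
    div_self hR.ne', zero_div, arcsin_one, arcsin_zero]
  ring

end Kernel

section UModelBounds

variable {Λ p x : ℝ}

lemma intervalIntegrable_rpow_mul_inv_sqrt_one_sub (hΛ : 0 < Λ) (a : ℝ) (hx : 0 < x)
    (hxR : x ≤ √(3 / Λ)) :
    IntervalIntegrable (fun ρ ↦ ρ ^ (-a) * (√(1 - Λ / 3 * ρ ^ 2))⁻¹) volume x √(3 / Λ) := by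
  refine (intervalIntegrable_inv_sqrt_one_sub hΛ hx.le hxR).continuousOn_mul fun ρ hρ ↦ ?_
  rw [uIcc_of_le hxR] at hρ
  exact (continuousAt_rpow_const ρ _ (Or.inl (hx.trans_le hρ.1).ne')).continuousWithinAt

lemma uModel_eq_integral_rpow_mul (Λ p x : ℝ) :
    uModel Λ p x = ∫ ρ in x..√(3 / Λ), ρ ^ (-(2 / (p - 1))) * (√(1 - Λ / 3 * ρ ^ 2))⁻¹ := by
  simp only [uModel, div_eq_mul_inv]

lemma uModel_le (hΛ : 0 < Λ) (hp : 1 ≤ p) (hx : 0 < x) (hxR : x ≤ √(3 / Λ)) :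
    uModel Λ p x ≤ x ^ (-(2 / (p - 1))) * (π / 2 * √(3 / Λ)) := by
  rw [uModel_eq_integral_rpow_mul, ← integral_inv_sqrt_one_sub hΛ,
    ← intervalIntegral.integral_const_mul]
  calc _ ≤ ∫ ρ in x..√(3 / Λ), x ^ (-(2 / (p - 1))) * (√(1 - Λ / 3 * ρ ^ 2))⁻¹ := by
        refine intervalIntegral.integral_mono_on hxR
          (intervalIntegrable_rpow_mul_inv_sqrt_one_sub hΛ _ hx hxR) ?_ fun ρ hρ ↦ ?_
        · exact (intervalIntegrable_inv_sqrt_one_sub hΛ hx.le hxR).const_mul _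
        · refine mul_le_mul_of_nonneg_right ?_ (by positivity)
          exact rpow_le_rpow_of_nonpos hx hρ.1
            (neg_nonpos.2 (div_nonneg zero_le_two (sub_nonneg.2 hp)))
    _ ≤ _ := by
        rw [intervalIntegral.integral_const_mul, intervalIntegral.integral_const_mul]
        gcongr
        exact intervalIntegral.integral_mono_interval hx.le hxR le_rfl
          (Eventually.of_forall fun ρ ↦ by positivity)
          (intervalIntegrable_inv_sqrt_one_sub hΛ le_rfl (hx.le.trans hxR))

lemma rpow_integral_le_uModel (hΛ : 0 < Λ) (hp : p ≠ 3) (hx : 0 < x) (hxR : x ≤ √(3 / Λ)) :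
    (√(3 / Λ) ^ (-(2 / (p - 1)) + 1) - x ^ (-(2 / (p - 1)) + 1)) / (-(2 / (p - 1)) + 1) ≤
      uModel Λ p x := by
  have h₀ : (0 : ℝ) ∉ uIcc x √(3 / Λ) := by
    rw [uIcc_of_le hxR]
    exact fun h ↦ hx.not_ge h.1
  have hne : -(2 / (p - 1)) ≠ -1 := by
    intro h
    rcases eq_or_ne (p - 1) 0 with hp₁ | hp₁
    · simp [hp₁] at h
    · exact hp (by linarith [(div_eq_one_iff_eq hp₁).1 (neg_inj.1 h)])
  rw [uModel_eq_integral_rpow_mul, ← integral_rpow (Or.inr ⟨hne, h₀⟩)]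
  refine intervalIntegral.integral_mono_on_of_le_Ioo hxR
    (intervalIntegral.intervalIntegrable_rpow (Or.inr h₀))
    (intervalIntegrable_rpow_mul_inv_sqrt_one_sub hΛ _ hx hxR) fun ρ hρ ↦ ?_
  have hρ₀ : 0 < ρ := hx.trans hρ.1
  have hs : 0 < √(1 - Λ / 3 * ρ ^ 2) :=
    sqrt_pos.2 (one_sub_div_three_mul_sq_pos hΛ hρ₀.le hρ.2)
  refine le_mul_of_one_le_right (by positivity) ((one_le_inv₀ hs).2 (sqrt_le_one.2 ?_))
  nlinarith [hΛ, sq_nonneg ρ]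

end UModelBounds

section RealInequalities

variable {x : ℝ}

lemma le_rpow_inv_of_le_rpow_neg_mul {a C E : ℝ} (hx : 0 < x) (ha : 0 < a) (hE : 0 < E)
    (h : E ≤ x ^ (-a) * C) : x ≤ (C / E) ^ a⁻¹ := by
  have hxa : 0 < x ^ a := rpow_pos_of_pos hx a
  have : x ^ a ≤ C / E := by
    rw [rpow_neg hx.le, inv_mul_eq_div, le_div_iff₀ hxa] at h
    rwa [le_div_iff₀ hE, mul_comm]
  calc x = (x ^ a) ^ a⁻¹ := (rpow_rpow_inv hx.le ha.ne').symm
    _ ≤ (C / E) ^ a⁻¹ := rpow_le_rpow hxa.le this (inv_nonneg.2 ha.le)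

/-- The factor `2` comes from bounding the sum `c + R ^ (-q)` by twice its larger term. -/
lemma two_rpow_mul_min_le_of_rpow_neg_le_add {q c R : ℝ} (hx : 0 < x) (hq : 0 < q) (hc : 0 < c)
    (hR : 0 < R) (h : x ^ (-q) ≤ c + R ^ (-q)) : 2 ^ (-q⁻¹) * min (c ^ (-q⁻¹)) R ≤ x := by
  set m := max c (R ^ (-q))
  have hm : 0 < m := lt_max_of_lt_left hc
  have hm_ge : min (c ^ (-q⁻¹)) R ≤ m ^ (-q⁻¹) := by
    rcases max_choice c (R ^ (-q)) with h | h <;> rw [show m = _ from h]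
    · exact min_le_left _ _
    · rw [← rpow_mul hR.le, neg_mul_neg, mul_inv_cancel₀ hq.ne', rpow_one]
      exact min_le_right _ _
  have hle : x ^ (-q) ≤ 2 * m := by
    linarith [le_max_left c (R ^ (-q)), le_max_right c (R ^ (-q))]
  calc 2 ^ (-q⁻¹) * min (c ^ (-q⁻¹)) R ≤ 2 ^ (-q⁻¹) * m ^ (-q⁻¹) := by gcongr
    _ = (2 * m) ^ (-q⁻¹) := (mul_rpow zero_le_two hm.le).symm
    _ ≤ (x ^ (-q)) ^ (-q⁻¹) :=
        rpow_le_rpow_of_nonpos (rpow_pos_of_pos hx _) hle (neg_nonpos.2 (inv_nonneg.2 hq.le))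
    _ = x := by rw [← rpow_mul hx.le, neg_mul_neg, mul_inv_cancel₀ hq.ne', rpow_one]

end RealInequalities

section PseudoRadius

variable {Λ p t x : ℝ}

lemma le_rpow_mul_exp_of_uModel_eq_exp (hΛ : 0 < Λ) (hp : 1 < p) (hx : 0 < x)
    (hxR : x ≤ √(3 / Λ)) (hu : uModel Λ p x = exp (-t / (p - 1))) :
    x ≤ (π / 2 * √(3 / Λ)) ^ ((p - 1) / 2) * exp (t / 2) := by
  have hp₁ : 0 < p - 1 := sub_pos.2 hp
  have h := le_rpow_inv_of_le_rpow_neg_mul hx (by positivity) (exp_pos _)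
    (hu ▸ uModel_le hΛ hp.le hx hxR)
  rw [inv_div, div_rpow (by positivity) (exp_pos _).le, ← exp_mul, div_eq_mul_inv, ← exp_neg] at h
  refine h.trans_eq ?_
  congr 2
  field_simp

lemma two_rpow_mul_min_le_of_uModel_eq_exp (hΛ : 0 < Λ) (hp₁ : 1 < p) (hp₃ : p < 3) (hx : 0 < x)
    (hxR : x ≤ √(3 / Λ)) (hu : uModel Λ p x = exp (-t / (p - 1))) :
    2 ^ (-((3 - p) / (p - 1))⁻¹) *
        min (((3 - p) / (p - 1)) ^ (-((3 - p) / (p - 1))⁻¹) * exp (t / (3 - p))) √(3 / Λ) ≤ x := by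
  have hp₁' : p - 1 ≠ 0 := by linarith
  set k := (3 - p) / (p - 1) with hk
  have hk₀ : 0 < k := div_pos (by linarith) (by linarith)
  have hlow := hu ▸ rpow_integral_le_uModel hΛ hp₃.ne hx hxR
  have hexp : -(2 / (p - 1)) + 1 = -k := by
    rw [hk]
    field_simp
    ring
  rw [hexp] at hlow
  have h : x ^ (-k) ≤ k * exp (-t / (p - 1)) + √(3 / Λ) ^ (-k) := by
    rw [div_le_iff_of_neg (neg_neg_of_pos hk₀)] at hlow
    linarith
  convert two_rpow_mul_min_le_of_rpow_neg_le_add hx hk₀ (by positivity)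
    (sqrt_pos.2 (by positivity)) h using 3
  rw [mul_rpow hk₀.le (exp_pos _).le, ← exp_mul]
  congr 2
  rw [hk]
  field_simp

end PseudoRadius

section Limits

lemma tendsto_sub_div_sub_one_nhdsGT_one {c : ℝ} (hc : 1 < c) :
    Tendsto (fun p : ℝ ↦ (c - p) / (p - 1)) (𝓝[>] 1) atTop := by
  have hnum : Tendsto (fun p : ℝ ↦ c - p) (𝓝[>] 1) (𝓝 (c - 1)) :=
    (continuous_const.sub continuous_id).continuousWithinAt.tendsto
  have hden : Tendsto (fun p : ℝ ↦ (p - 1)⁻¹) (𝓝[>] 1) atTop := by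
    refine tendsto_inv_nhdsGT_zero.comp (tendsto_nhdsWithin_of_tendsto_nhds_of_eventually_within _
      ?_ (eventually_nhdsWithin_of_forall fun _ hp ↦ sub_pos.2 (mem_Ioi.1 hp)))
    simpa using ((continuous_sub_right (1 : ℝ)).tendsto 1).mono_left nhdsWithin_le_nhds
  exact hnum.pos_mul_atTop (sub_pos.2 hc) hden

lemma tendsto_rpow_neg_inv_atTop {a : ℝ} (ha : 0 < a) :
    Tendsto (fun k : ℝ ↦ a ^ (-k⁻¹)) atTop (𝓝 1) := by
  simpa [Function.comp_def] using
    (continuousAt_const_rpow ha.ne').tendsto.comp tendsto_inv_atTop_zero.neg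

lemma tendsto_self_rpow_neg_inv_atTop : Tendsto (fun k : ℝ ↦ k ^ (-k⁻¹)) atTop (𝓝 1) := by
  simpa [neg_div, one_div] using tendsto_rpow_neg_div

lemma tendsto_rpow_mul_exp_nhdsGT_one {C : ℝ} (hC : C ≠ 0) (t : ℝ) :
    Tendsto (fun p : ℝ ↦ C ^ ((p - 1) / 2) * exp (t / 2)) (𝓝[>] 1) (𝓝 (exp (t / 2))) := by
  have : ContinuousAt (fun p : ℝ ↦ C ^ ((p - 1) / 2) * exp (t / 2)) 1 :=
    ((continuousAt_const_rpow hC).comp (by fun_prop)).mul continuousAt_const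
  simpa using this.tendsto.mono_left nhdsWithin_le_nhds

lemma tendsto_two_rpow_mul_min_nhdsGT_one (R t : ℝ) :
    Tendsto (fun p : ℝ ↦ 2 ^ (-((3 - p) / (p - 1))⁻¹) *
        min (((3 - p) / (p - 1)) ^ (-((3 - p) / (p - 1))⁻¹) * exp (t / (3 - p))) R)
      (𝓝[>] 1) (𝓝 (min (exp (t / 2)) R)) := by
  have hk := tendsto_sub_div_sub_one_nhdsGT_one (show (1 : ℝ) < 3 by norm_num)
  have hexp : Tendsto (fun p : ℝ ↦ exp (t / (3 - p))) (𝓝[>] 1) (𝓝 (exp (t / 2))) := by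
    have : ContinuousAt (fun p : ℝ ↦ exp (t / (3 - p))) 1 := by fun_prop (disch := norm_num)
    convert this.tendsto.mono_left nhdsWithin_le_nhds using 3
    norm_num
  simpa using ((tendsto_rpow_neg_inv_atTop two_pos).comp hk).mul
    ((((tendsto_self_rpow_neg_inv_atTop).comp hk).mul hexp).min tendsto_const_nhds)

end Limits

lemma min_exp_half_eq_ite {R : ℝ} (hR : 0 < R) (t : ℝ) :
    min (exp (t / 2)) R = if t < 2 * log R then exp (t / 2) else R := by
  have : t < 2 * log R ↔ exp (t / 2) < R := by
    rw [← lt_log_iff_exp_lt hR]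
    constructor <;> intro h <;> linarith
  split_ifs with h
  · exact min_eq_left (this.1 h).le
  · exact min_eq_right (not_lt.1 (mt this.2 h))

/-- The pseudo-radial functions `r_p(t)`, defined by `u_p(r_p(t)) = e^{-t/(p-1)}`,
converge pointwise as `p → 1⁺` to `e^{t/2}` for `t < 2 log R_Λ` and to `R_Λ` for
`t ≥ 2 log R_Λ`. -/
theorem stmt_15 (Λ : ℝ) (hΛ : 0 < Λ) (r : ℝ → ℝ → ℝ)
    (hr : ∀ p : ℝ, 1 < p → p < 3 → ∀ t : ℝ,
      r p t ∈ Set.Ioo (0 : ℝ) (Real.sqrt (3 / Λ)) ∧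
      uModel Λ p (r p t) = Real.exp (-t / (p - 1))) :
    ∀ t : ℝ,
      Tendsto (fun p : ℝ => r p t) (nhdsWithin 1 (Set.Ioi 1))
        (nhds (if t < 2 * Real.log (Real.sqrt (3 / Λ)) then Real.exp (t / 2)
          else Real.sqrt (3 / Λ))) := by
  intro t
  have hR : 0 < √(3 / Λ) := sqrt_pos.2 (by positivity)
  have hp : ∀ᶠ p in 𝓝[>] (1 : ℝ), p ∈ Ioo 1 3 := Ioo_mem_nhdsGT (by norm_num)
  rw [← min_exp_half_eq_ite hR]
  refine tendsto_of_tendsto_of_tendsto_of_le_of_le' (tendsto_two_rpow_mul_min_nhdsGT_one _ t)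
    ((tendsto_rpow_mul_exp_nhdsGT_one (C := π / 2 * √(3 / Λ)) (by positivity) t).min
      tendsto_const_nhds) ?_ ?_
  · filter_upwards [hp] with p ⟨hp₁, hp₃⟩
    obtain ⟨⟨hx, hxR⟩, hu⟩ := hr p hp₁ hp₃ t
    exact two_rpow_mul_min_le_of_uModel_eq_exp hΛ hp₁ hp₃ hx hxR.le hu
  · filter_upwards [hp] with p ⟨hp₁, hp₃⟩
    obtain ⟨⟨hx, hxR⟩, hu⟩ := hr p hp₁ hp₃ t
    exact le_min (le_rpow_mul_exp_of_uModel_eq_exp hΛ hp₁ hx hxR.le hu) hxR.le
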